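/- arXiv:2409.13081 — 2 statements merged into one kernel-verified Lean document; each statement's English description precedes it below -/
import Mathlib

section
/- Let V : ℝⁿ → ℝ be continuously differentiable, positive definite with respect to a point, and radially unbounded, and suppose its derivative along solutions of an autonomous ODE satisfies V̇ ≤ 0 everywhere with V̇ = 0 only on a set whose largest invariant subset is the equilibrium. Then the equilibrium is asymptotically stable (LaSalle/Barbashin-Krasovskii invariance principle specialization). -/
/-!
`V` decreases along solutions, so a solution starting close to `x*` stays below the minimum of `V`
on a small sphere around `x*`, hence inside that sphere. Along any solution `V` converges and the
solution stays in a compact sublevel set of `V`. Its cluster points at `+∞` form an invariant set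
(by Grönwall's estimate for nearby solutions) on which `V̇ = 0`, since near a cluster point with
`V̇ < 0` the solution would pass at arbitrarily late times and lose a fixed amount of `V` each time.
So that set is `{x*}`, and a solution confined to a compact set with a single cluster point
converges to it.
-/

open Filter Topology Metric Set

theorem isCompact_setOf_le_of_forall_lt_norm {E : Type*} [NormedAddCommGroup E] [ProperSpace E]
    {V : E → ℝ} (hV : Continuous V) (hVrad : ∀ c : ℝ, ∃ r : ℝ, ∀ x, r < ‖x‖ → c < V x) (c : ℝ) :
    IsCompact {x | V x ≤ c} := by
  obtain ⟨r, hr⟩ := hVrad c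
  refine (isCompact_closedBall 0 r).of_isClosed_subset (isClosed_le hV continuous_const) ?_
  intro x hx
  rw [mem_closedBall_zero_iff]
  by_contra! hxr
  exact (hr x hxr).not_ge hx

theorem antitone_comp_of_fderiv_apply_nonpos {E : Type*} [NormedAddCommGroup E]
    [NormedSpace ℝ E] {f : E → E} {V : E → ℝ} (hV : Differentiable ℝ V)
    (hVf : ∀ p, fderiv ℝ V p (f p) ≤ 0) {x : ℝ → E} (hx : ∀ t, HasDerivAt x (f (x t)) t) :
    Antitone (V ∘ x) := by
  have hVx (t : ℝ) : HasDerivAt (V ∘ x) (fderiv ℝ V (x t) (f (x t))) t :=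
    (hV (x t)).hasFDerivAt.comp_hasDerivAt t (hx t)
  exact antitone_of_deriv_nonpos (fun t => (hVx t).differentiableAt)
    fun t => (hVx t).deriv ▸ hVf (x t)

theorem exists_forall_dist_lt_of_antitone_comp {X : Type*} [MetricSpace X] [ProperSpace X]
    {V : X → ℝ} {x₀ : X} (hV : Continuous V) (hV0 : V x₀ = 0) (hVpos : ∀ p, p ≠ x₀ → 0 < V p)
    {ε : ℝ} (hε : 0 < ε) :
    ∃ δ > 0, ∀ x : ℝ → X, Continuous x → Antitone (V ∘ x) → dist (x 0) x₀ < δ →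
      ∀ t ≥ 0, dist (x t) x₀ < ε := by
  obtain ⟨m, hm, hmV⟩ := (isCompact_sphere x₀ ε).exists_forall_le' hV.continuousOn
    fun p hp => hVpos p (ne_of_mem_sphere hp hε.ne')
  have hnhds : {p | V p < m} ∈ 𝓝 x₀ :=
    (isOpen_lt hV continuous_const).mem_nhds (by simpa [hV0] using hm)
  obtain ⟨δ, hδ, hball⟩ := Metric.mem_nhds_iff.1 hnhds
  refine ⟨min δ ε, lt_min hδ hε, fun x hx hVx hx0 t ht => ?_⟩
  by_contra! hxt
  -- the trajectory has to cross the sphere, where `V ≥ m`, although `V (x 0) < m`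
  obtain ⟨s, hs, hxs⟩ := intermediate_value_Icc ht (hx.dist continuous_const).continuousOn
    ⟨(hx0.trans_le (min_le_right _ _)).le, hxt⟩
  have hVx0 : V (x 0) < m := hball (hx0.trans_le (min_le_left _ _))
  exact (hmV (x s) hxs).not_gt ((hVx hs.1).trans_lt hVx0)

theorem MapClusterPt.nonneg_of_hasDerivAt_of_tendsto {X : Type*} [MetricSpace X]
    {x : ℝ → X} {V W : X → ℝ} {M : NNReal} {c : ℝ} {p : X} (hp : MapClusterPt p atTop x)
    (hW : ContinuousAt W p) (hVx : ∀ t, HasDerivAt (V ∘ x) (W (x t)) t)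
    (hx : LipschitzOnWith M x (Ici 0)) (hc : Tendsto (V ∘ x) atTop (𝓝 c)) : 0 ≤ W p := by
  by_contra! hWp
  set η := -W p / 2
  have hη : 0 < η := by simp only [η]; linarith
  obtain ⟨r, hr, hWr⟩ := Metric.mem_nhds_iff.1
    (hW.eventually (gt_mem_nhds (by simp only [η]; linarith : W p < -η)))
  -- `x` needs at least the time `τ` to leave `ball p r` after entering `ball p (r / 2)`
  set τ := r / (2 * (M + 1))
  have hτ : 0 < τ := by positivity
  have hMτ : M * τ < r / 2 := by
    simp only [τ]; rw [mul_div_assoc', div_lt_div_iff₀ (by positivity) two_pos]; nlinarith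
  have hclose : ∀ᶠ s in atTop, dist (V (x s)) c < η * τ / 2 ∧ dist (V (x (s + τ))) c < η * τ / 2 :=
    (tendsto_iff_dist_tendsto_zero.1 hc).eventually_lt_const (by positivity) |>.and
      ((tendsto_iff_dist_tendsto_zero.1 (hc.comp (tendsto_atTop_add_const_right _ τ tendsto_id))
        ).eventually_lt_const (by positivity))
  obtain ⟨s, hps, hs0, hVs, hVsτ⟩ :=
    ((mapClusterPt_iff_frequently.1 hp _ (ball_mem_nhds p (half_pos hr))).and_eventually
      ((eventually_ge_atTop 0).and hclose)).exists
  have hstay : ∀ w ∈ Icc s (s + τ), W (x w) < -η := by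
    intro w hw
    have hws : dist w s ≤ τ := by
      rw [Real.dist_eq, abs_of_nonneg (by linarith [hw.1])]
      linarith [hw.2]
    have hdist : dist (x w) (x s) ≤ M * τ :=
      (hx.dist_le_mul w (hs0.trans hw.1) s hs0).trans (by gcongr)
    apply hWr
    calc dist (x w) p ≤ dist (x w) (x s) + dist (x s) p := dist_triangle _ _ _
      _ < r / 2 + r / 2 := add_lt_add_of_lt_of_le (hdist.trans_lt hMτ) (mem_ball.1 hps).le
      _ = r := add_halves r
  have hdrop : V (x (s + τ)) - V (x s) ≤ -η * (s + τ - s) :=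
    (convex_Icc s (s + τ)).image_sub_le_mul_sub_of_deriv_le
      (HasDerivAt.continuousOn fun w _ => hVx w)
      (fun w _ => (hVx w).differentiableAt.differentiableWithinAt)
      (fun w hw => ((hVx w).deriv).symm ▸ (hstay w (interior_subset hw)).le)
      s (left_mem_Icc.2 (by linarith)) (s + τ) (right_mem_Icc.2 (by linarith)) (by linarith)
  rw [Real.dist_eq, abs_lt] at hVs hVsτ
  nlinarith

theorem MapClusterPt.of_trajectories_ODE {E : Type*} [NormedAddCommGroup E] [NormedSpace ℝ E]
    {f : E → E} {K : Set E} {L : NNReal} (hf : LipschitzOnWith L f K) {x y : ℝ → E}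
    (hx : ∀ t, HasDerivAt x (f (x t)) t) (hxK : ∀ t ≥ 0, x t ∈ K)
    (hy : ∀ t, HasDerivAt y (f (y t)) t) (hyK : ∀ t ≥ 0, y t ∈ K)
    (h0 : MapClusterPt (y 0) atTop x) {t : ℝ} (ht : 0 ≤ t) : MapClusterPt (y t) atTop x := by
  have hgronwall : ∀ s ≥ 0, dist (x (s + t)) (y t) ≤ dist (x s) (y 0) * Real.exp (L * t) := by
    intro s hs
    have hxs (w : ℝ) : HasDerivAt (fun w => x (s + w)) (f (x (s + w))) w :=
      (hx (s + w)).comp_const_add s w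
    simpa using dist_le_of_trajectories_ODE_of_mem (v := fun _ => f) (s := fun _ => K)
      (fun _ _ => hf) (HasDerivAt.continuousOn fun w _ => hxs w)
      (fun w _ => (hxs w).hasDerivWithinAt) (fun w hw => hxK _ (by linarith [hw.1]))
      (HasDerivAt.continuousOn fun w _ => hy w) (fun w _ => (hy w).hasDerivWithinAt)
      (fun w hw => hyK w hw.1) le_rfl t ⟨ht, le_rfl⟩
  rw [Metric.nhds_basis_ball.mapClusterPt_iff_frequently] at h0 ⊢
  intro ε hε
  have hδ : 0 < ε / Real.exp (L * t) := by positivity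
  refine (tendsto_atTop_add_const_right _ t tendsto_id).frequently
    (((h0 _ hδ).and_eventually (eventually_ge_atTop 0)).mono fun s ⟨hs, hs0⟩ => ?_)
  rw [mem_ball, lt_div_iff₀ (Real.exp_pos _)] at hs
  exact mem_ball.2 ((hgronwall s hs0).trans_lt hs)

theorem tendsto_of_forall_invariant_subset_singleton {E : Type*} [NormedAddCommGroup E]
    [NormedSpace ℝ E] {f : E → E} (hf : LocallyLipschitz f) {V : E → ℝ} (hV : ContDiff ℝ 1 V)
    (hVf : ∀ p, fderiv ℝ V p (f p) ≤ 0) {x₀ : E}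
    (hlargest : ∀ S ⊆ {p | fderiv ℝ V p (f p) = 0},
      (∀ y : ℝ → E, (∀ t, HasDerivAt y (f (y t)) t) → y 0 ∈ S → ∀ t ≥ 0, y t ∈ S) → S ⊆ {x₀})
    {x : ℝ → E} (hx : ∀ t, HasDerivAt x (f (x t)) t) (hK : IsCompact {p | V p ≤ V (x 0)}) :
    Tendsto x atTop (𝓝 x₀) := by
  set K := {p | V p ≤ V (x 0)}
  have hVd : Differentiable ℝ V := hV.differentiable one_ne_zero
  have hanti (y : ℝ → E) (hy : ∀ t, HasDerivAt y (f (y t)) t) : Antitone (V ∘ y) :=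
    antitone_comp_of_fderiv_apply_nonpos hVd hVf hy
  have hxK : ∀ t ≥ 0, x t ∈ K := fun t ht => hanti x hx ht
  have hc : Tendsto (V ∘ x) atTop (𝓝 (⨅ t, V (x t))) := by
    obtain ⟨m, hm⟩ := hK.bddBelow_image hV.continuous.continuousOn
    refine tendsto_atTop_ciInf (hanti x hx) ⟨m, ?_⟩
    rintro _ ⟨t, rfl⟩
    exact (hm ⟨_, hxK _ (le_max_right t 0), rfl⟩).trans (hanti x hx (le_max_left t 0))
  have hxlip : ∃ M, LipschitzOnWith M x (Ici 0) := by
    obtain ⟨M, hM⟩ := hK.exists_bound_of_continuousOn hf.continuous.continuousOn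
    refine ⟨M.toNNReal, (convex_Ici 0).lipschitzOnWith_of_nnnorm_hasDerivWithin_le
      (fun t _ => (hx t).hasDerivWithinAt) fun t ht => ?_⟩
    rw [← NNReal.coe_le_coe, coe_nnnorm, Real.coe_toNNReal']
    exact (hM _ (hxK t ht)).trans (le_max_left _ _)
  obtain ⟨M, hM⟩ := hxlip
  obtain ⟨L, hL⟩ := hf.locallyLipschitzOn.exists_lipschitzOnWith_of_compact hK
  have hW : Continuous fun p => fderiv ℝ V p (f p) :=
    (hV.continuous_fderiv one_ne_zero).clm_apply hf.continuous
  have hω_zero : {p | MapClusterPt p atTop x} ⊆ {p | fderiv ℝ V p (f p) = 0} := fun p hp =>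
    le_antisymm (hVf p) (hp.nonneg_of_hasDerivAt_of_tendsto hW.continuousAt
      (fun t => (hVd (x t)).hasFDerivAt.comp_hasDerivAt t (hx t)) hM hc)
  have hω_inv (y : ℝ → E) (hy : ∀ t, HasDerivAt y (f (y t)) t)
      (hy0 : MapClusterPt (y 0) atTop x) (t : ℝ) (ht : 0 ≤ t) : MapClusterPt (y t) atTop x := by
    have hy0K : y 0 ∈ K := (isClosed_le hV.continuous continuous_const).mem_of_mapClusterPt hy0
      (eventually_ge_atTop 0 |>.mono hxK)
    exact hy0.of_trajectories_ODE hL hx hxK hy (fun s hs => (hanti y hy hs).trans hy0K) ht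
  exact hK.tendsto_nhds_of_unique_mapClusterPt ((eventually_ge_atTop 0).mono hxK)
    fun p _ hp => hlargest _ hω_zero hω_inv hp

theorem stmt_6_general (n : ℕ)
    (f : EuclideanSpace ℝ (Fin n) → EuclideanSpace ℝ (Fin n))
    (hf : LocallyLipschitz f)
    (xstar : EuclideanSpace ℝ (Fin n))
    (V : EuclideanSpace ℝ (Fin n) → ℝ) (hV : ContDiff ℝ 1 V)
    (hV0 : V xstar = 0) (hVpos : ∀ x, x ≠ xstar → 0 < V x)
    (hVrad : ∀ c : ℝ, ∃ r : ℝ, ∀ x, r < ‖x‖ → c < V x)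
    (Vdot : EuclideanSpace ℝ (Fin n) → ℝ)
    (hVdot : ∀ x, Vdot x = inner ℝ (gradient V x) (f x))
    (hVdotle : ∀ x, Vdot x ≤ 0)
    (IsSolution : (ℝ → EuclideanSpace ℝ (Fin n)) → Prop)
    (hIsSol : ∀ x, IsSolution x ↔ ∀ t, HasDerivAt x (f (x t)) t)
    (Invariant : Set (EuclideanSpace ℝ (Fin n)) → Prop)
    (hInv : ∀ S, Invariant S ↔
      ∀ x : ℝ → EuclideanSpace ℝ (Fin n), IsSolution x → x 0 ∈ S → ∀ t ≥ (0:ℝ), x t ∈ S)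
    (hLargest : ∀ S : Set (EuclideanSpace ℝ (Fin n)),
      S ⊆ {x | Vdot x = 0} → Invariant S → S ⊆ {xstar}) :
    (∀ ε > (0:ℝ), ∃ δ > (0:ℝ), ∀ x : ℝ → EuclideanSpace ℝ (Fin n),
        IsSolution x → ‖x 0 - xstar‖ < δ → ∀ t ≥ (0:ℝ), ‖x t - xstar‖ < ε) ∧
    (∃ δ > (0:ℝ), ∀ x : ℝ → EuclideanSpace ℝ (Fin n),
        IsSolution x → ‖x 0 - xstar‖ < δ → Tendsto x atTop (𝓝 xstar)) := by
  have hVdot_eq (p : EuclideanSpace ℝ (Fin n)) : Vdot p = fderiv ℝ V p (f p) := by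
    rw [hVdot, ((hV.differentiable one_ne_zero) p).hasGradientAt.fderiv_apply]
  have hVf (p : EuclideanSpace ℝ (Fin n)) : fderiv ℝ V p (f p) ≤ 0 := hVdot_eq p ▸ hVdotle p
  simp only [hIsSol] at hInv ⊢
  constructor
  · intro ε hε
    obtain ⟨δ, hδ, hstable⟩ := exists_forall_dist_lt_of_antitone_comp hV.continuous hV0 hVpos hε
    refine ⟨δ, hδ, fun x hx hx0 t ht => ?_⟩
    simpa only [dist_eq_norm] using hstable x (continuous_iff_continuousAt.2 fun t =>
      (hx t).continuousAt) (antitone_comp_of_fderiv_apply_nonpos (hV.differentiable one_ne_zero)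
        hVf hx) (by rwa [dist_eq_norm]) t ht
  · refine ⟨1, one_pos, fun x hx _ => ?_⟩
    refine tendsto_of_forall_invariant_subset_singleton hf hV hVf (fun S hS hSinv => ?_) hx
      (isCompact_setOf_le_of_forall_lt_norm hV.continuous hVrad _)
    exact hLargest S (fun p hp => (hVdot_eq p).trans (hS hp)) ((hInv S).2 hSinv)

theorem stmt_6 (n : ℕ)
    (f : EuclideanSpace ℝ (Fin n) → EuclideanSpace ℝ (Fin n))
    (hf : LocallyLipschitz f)
    (xstar : EuclideanSpace ℝ (Fin n)) (hxstar : f xstar = 0)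
    (V : EuclideanSpace ℝ (Fin n) → ℝ) (hV : ContDiff ℝ 1 V)
    (hV0 : V xstar = 0) (hVpos : ∀ x, x ≠ xstar → 0 < V x)
    (hVrad : ∀ c : ℝ, ∃ r : ℝ, ∀ x, r < ‖x‖ → c < V x)
    (Vdot : EuclideanSpace ℝ (Fin n) → ℝ)
    (hVdot : ∀ x, Vdot x = inner ℝ (gradient V x) (f x))
    (hVdotle : ∀ x, Vdot x ≤ 0)
    (IsSolution : (ℝ → EuclideanSpace ℝ (Fin n)) → Prop)
    (hIsSol : ∀ x, IsSolution x ↔ ∀ t, HasDerivAt x (f (x t)) t)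
    (Invariant : Set (EuclideanSpace ℝ (Fin n)) → Prop)
    (hInv : ∀ S, Invariant S ↔
      ∀ x : ℝ → EuclideanSpace ℝ (Fin n), IsSolution x → x 0 ∈ S → ∀ t ≥ (0:ℝ), x t ∈ S)
    (hLargest : ∀ S : Set (EuclideanSpace ℝ (Fin n)),
      S ⊆ {x | Vdot x = 0} → Invariant S → S ⊆ {xstar})
    (ℓ : ℝ) (hℓ : 0 < ℓ)
    (hΩcompact : IsCompact {x | V x ≤ ℓ})
    (hΩinv : Invariant {x | V x ≤ ℓ}) :
    (∀ ε > (0:ℝ), ∃ δ > (0:ℝ), ∀ x : ℝ → EuclideanSpace ℝ (Fin n),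
        IsSolution x → ‖x 0 - xstar‖ < δ → ∀ t ≥ (0:ℝ), ‖x t - xstar‖ < ε) ∧
    (∃ δ > (0:ℝ), ∀ x : ℝ → EuclideanSpace ℝ (Fin n),
        IsSolution x → ‖x 0 - xstar‖ < δ → Tendsto x atTop (𝓝 xstar)) :=
  stmt_6_general n f hf xstar V hV hV0 hVpos hVrad Vdot hVdot hVdotle IsSolution hIsSol Invariant
    hInv hLargest
end

section
/- Given the update law dp̂₁/dt = γ₁σ(θ₁)e₂ᵀ(e₁ + f₂ + k₁x₂) and the error dynamics ė₂ = e₁·0 + (f₂ + g₂θ₁ + k₁x₂), with virtual control ξ₃ = -p̂₁(e₁ + f₂ + k₁x₂) - k₂σ(θ₁)e₂ and e₃ = g₂ - ξ₃, the derivative of V₂ = V₁ + (1/2)e₂ᵀe₂ + (1/2)γ₁⁻¹|θ₁|(p̂₁ - p₁)² satisfies V̇₂ = -k₁e₁ᵀe₁ - k₂|θ₁|e₂ᵀe₂ + θ₁e₃ᵀe₂, where p₁ = θ₁⁻¹. -/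
/-!
With `A = e₂ ⬝ᵥ (e₁ + f₂ + k₁ x₂)`, differentiating term by term gives
`V̇₂ = -k₁ e₁ ⬝ᵥ e₁ + A + θ₁ e₂ ⬝ᵥ g₂ + γ₁⁻¹ |θ₁| (p̂₁ - p₁) γ₁ σ A`.
Because `|θ₁| σ = θ₁` and `θ₁ p₁ = 1`, the last term is `θ₁ p̂₁ A - A`, so `A` cancels and what
remains is `θ₁ e₂ ⬝ᵥ (g₂ + p̂₁ (e₁ + f₂ + k₁ x₂)) = θ₁ e₂ ⬝ᵥ (e₃ - k₂ σ e₂)`, where `σ θ₁ = |θ₁|`.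
-/

open Matrix

theorem HasDerivAt.dotProduct {𝕜 ι : Type*} [NontriviallyNormedField 𝕜] [Fintype ι]
    {f g : 𝕜 → ι → 𝕜} {f' g' : ι → 𝕜} {x : 𝕜} (hf : HasDerivAt f f' x)
    (hg : HasDerivAt g g' x) :
    HasDerivAt (fun y => f y ⬝ᵥ g y) (f' ⬝ᵥ g x + f x ⬝ᵥ g') x := by
  have hmul (i : ι) : HasDerivAt (fun y => f y i * g y i) (f' i * g x i + f x i * g' i) x :=
    (hasDerivAt_pi.1 hf i).mul (hasDerivAt_pi.1 hg i)
  exact (HasDerivAt.fun_sum fun i _ => hmul i).congr_deriv Finset.sum_add_distrib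

theorem HasDerivAt.half_dotProduct_self {ι : Type*} [Fintype ι] {f : ℝ → ι → ℝ} {f' : ι → ℝ}
    {x : ℝ} (hf : HasDerivAt f f' x) :
    HasDerivAt (fun y => 1 / 2 * (f y ⬝ᵥ f y)) (f x ⬝ᵥ f') x :=
  ((hf.dotProduct hf).const_mul (1 / 2)).congr_deriv (by rw [dotProduct_comm f']; ring)

theorem HasDerivAt.half_sq {f : ℝ → ℝ} {f' x : ℝ} (hf : HasDerivAt f f' x) :
    HasDerivAt (fun y => 1 / 2 * f y ^ 2) (f x * f') x :=
  ((hf.pow 2).const_mul (1 / 2)).congr_deriv (by simp only [Nat.cast_ofNat]; ring)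

theorem adaptive_backstepping_identity {ι : Type*} [Fintype ι] {θ γ k₁ k₂ p : ℝ} (hθ : θ ≠ 0)
    (hγ : γ ≠ 0) (e₁ e₂ f x g : ι → ℝ) :
    e₂ ⬝ᵥ e₁ + e₂ ⬝ᵥ (f + θ • g + k₁ • x)
        + γ⁻¹ * |θ| * ((p - θ⁻¹) * (γ * (θ / |θ|) * (e₂ ⬝ᵥ (e₁ + f + k₁ • x))))
      = -k₂ * |θ| * (e₂ ⬝ᵥ e₂)
        + θ * ((g - (-(p • (e₁ + f + k₁ • x)) - (k₂ * (θ / |θ|)) • e₂)) ⬝ᵥ e₂) := by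
  have habs : |θ| ≠ 0 := abs_ne_zero.2 hθ
  rw [dotProduct_comm (g - _) e₂]
  simp only [dotProduct_add, dotProduct_sub, dotProduct_neg, dotProduct_smul, smul_eq_mul]
  field_simp
  rw [sq_abs]
  ring

theorem stmt_8_general (θ₁ k₁ k₂ γ₁ : ℝ) (hθ₁ : θ₁ ≠ 0) (hγ₁ : 0 < γ₁)
    (p₁ σ : ℝ) (hp₁ : p₁ = θ₁⁻¹) (hσ : σ = θ₁ / |θ₁|)
    (f₂ : Fin 2 → ℝ)
    (e₁ e₂ x₂ g₂ : ℝ → (Fin 2 → ℝ)) (phat₁ : ℝ → ℝ) (V₁ : ℝ → ℝ)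
    (hdphat₁ : ∀ t, HasDerivAt phat₁ (γ₁ * σ * (e₂ t ⬝ᵥ (e₁ t + f₂ + k₁ • x₂ t))) t)
    (hde₂ : ∀ t, HasDerivAt e₂ (f₂ + θ₁ • g₂ t + k₁ • x₂ t) t)
    (hdV₁ : ∀ t, HasDerivAt V₁ (-k₁ * (e₁ t ⬝ᵥ e₁ t) + (e₂ t ⬝ᵥ e₁ t)) t)
    (ξ₃ : ℝ → (Fin 2 → ℝ))
    (hξ₃ : ∀ t, ξ₃ t = -(phat₁ t • (e₁ t + f₂ + k₁ • x₂ t)) - (k₂ * σ) • e₂ t)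
    (e₃ : ℝ → (Fin 2 → ℝ)) (he₃ : ∀ t, e₃ t = g₂ t - ξ₃ t)
    (V₂ : ℝ → ℝ)
    (hV₂ : ∀ t, V₂ t = V₁ t + (1/2) * (e₂ t ⬝ᵥ e₂ t) + (1/2) * γ₁⁻¹ * |θ₁| * (phat₁ t - p₁)^2) :
    ∀ t, HasDerivAt V₂
      (-k₁ * (e₁ t ⬝ᵥ e₁ t) - k₂ * |θ₁| * (e₂ t ⬝ᵥ e₂ t) + θ₁ * (e₃ t ⬝ᵥ e₂ t)) t := by
  intro t
  have hV₂_eq : V₂ = fun s => V₁ s + 1 / 2 * (e₂ s ⬝ᵥ e₂ s)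
      + γ₁⁻¹ * |θ₁| * (1 / 2 * (phat₁ s - p₁) ^ 2) :=
    funext fun s => by rw [hV₂]; ring
  have hderiv := ((hdV₁ t).add (hde₂ t).half_dotProduct_self).add
    (((hdphat₁ t).sub_const p₁).half_sq.const_mul (γ₁⁻¹ * |θ₁|))
  rw [hV₂_eq]
  refine hderiv.congr_deriv ?_
  rw [he₃, hξ₃, hσ, hp₁]
  linear_combination adaptive_backstepping_identity (k₂ := k₂) (p := phat₁ t) hθ₁ hγ₁.ne'
    (e₁ t) (e₂ t) f₂ (x₂ t) (g₂ t)

theorem stmt_8 (θ₁ k₁ k₂ γ₁ : ℝ) (hθ₁ : θ₁ ≠ 0) (hk₁ : 0 < k₁) (hk₂ : 0 < k₂) (hγ₁ : 0 < γ₁)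
    (p₁ σ : ℝ) (hp₁ : p₁ = θ₁⁻¹) (hσ : σ = θ₁ / |θ₁|)
    (f₂ : Fin 2 → ℝ)
    (e₁ e₂ x₂ g₂ : ℝ → (Fin 2 → ℝ)) (phat₁ : ℝ → ℝ) (V₁ : ℝ → ℝ)
    (hdphat₁ : ∀ t, HasDerivAt phat₁ (γ₁ * σ * (e₂ t ⬝ᵥ (e₁ t + f₂ + k₁ • x₂ t))) t)
    (hde₂ : ∀ t, HasDerivAt e₂ (f₂ + θ₁ • g₂ t + k₁ • x₂ t) t)
    (hdV₁ : ∀ t, HasDerivAt V₁ (-k₁ * (e₁ t ⬝ᵥ e₁ t) + (e₂ t ⬝ᵥ e₁ t)) t)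
    (ξ₃ : ℝ → (Fin 2 → ℝ))
    (hξ₃ : ∀ t, ξ₃ t = -(phat₁ t • (e₁ t + f₂ + k₁ • x₂ t)) - (k₂ * σ) • e₂ t)
    (e₃ : ℝ → (Fin 2 → ℝ)) (he₃ : ∀ t, e₃ t = g₂ t - ξ₃ t)
    (V₂ : ℝ → ℝ)
    (hV₂ : ∀ t, V₂ t = V₁ t + (1/2) * (e₂ t ⬝ᵥ e₂ t) + (1/2) * γ₁⁻¹ * |θ₁| * (phat₁ t - p₁)^2) :
    ∀ t, HasDerivAt V₂
      (-k₁ * (e₁ t ⬝ᵥ e₁ t) - k₂ * |θ₁| * (e₂ t ⬝ᵥ e₂ t) + θ₁ * (e₃ t ⬝ᵥ e₂ t)) t :=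
  stmt_8_general θ₁ k₁ k₂ γ₁ hθ₁ hγ₁ p₁ σ hp₁ hσ f₂ e₁ e₂ x₂ g₂ phat₁ V₁ hdphat₁ hde₂ hdV₁ ξ₃ hξ₃ e₃
    he₃ V₂ hV₂
end
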